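/- Let M be an N×N real matrix with a complete system of left eigenvectors β₁,...,β_N with eigenvalues λ₁,...,λ_N and biorthogonal right eigenvectors α₁,...,α_N (so βₖ αₗ = δₖₗ). Fix an index j and suppose β₁ is the j-th standard basis vector (eigenvalue 1), and suppose (βₖ)ⱼ = 0 for all k ≥ 3. If additionally every βₖ for k ≥ 2 has entries summing to 0, then α₂ has entries of the form (α₂)ₗ = c(1 − δⱼₗ) for some nonzero constant c. -/
import Mathlib


open Matrix Finset

theorem alpha_two_form {N : ℕ} (hN : 3 ≤ N) (M : Matrix (Fin N) (Fin N) ℝ)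
    (hrow : M.mulVec (fun _ => 1) = fun _ => 1)
    (β α : Fin N → Fin N → ℝ) (lam : Fin N → ℝ) (j : Fin N)
    (hindep : LinearIndependent ℝ β)
    (hleft : ∀ k, Matrix.vecMul (β k) M = lam k • β k)
    (hright : ∀ k, M.mulVec (α k) = lam k • α k)
    (hbio : ∀ k l, ∑ s, β k s * α l s = if k = l then 1 else 0)
    (hlam1 : lam ⟨0, by omega⟩ = 1)
    (hbeta1 : β ⟨0, by omega⟩ = fun l => if l = j then 1 else 0)
    (hzero : ∀ k : Fin N, 2 ≤ (k : ℕ) → β k j = 0)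
    (hsum : ∀ k : Fin N, 1 ≤ (k : ℕ) → ∑ l, β k l = 0) :
    ∃ c : ℝ, c ≠ 0 ∧ ∀ l, α ⟨1, by omega⟩ l = c * (1 - if j = l then 1 else 0) := by
  have h0 : (0 : ℕ) < N := by omega
  have h1 : (1 : ℕ) < N := by omega
  set k0 : Fin N := ⟨0, by omega⟩
  set k1 : Fin N := ⟨1, by omega⟩
  -- The matrix whose rows are β is invertible
  have hB : IsUnit (Matrix.of β) :=
    Matrix.linearIndependent_rows_iff_isUnit.mp hindep
  have hinj : Function.Injective (Matrix.mulVec (Matrix.of β)) :=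
    Matrix.mulVec_injective_iff_isUnit.mpr hB
  set v : Fin N → ℝ := fun l => 1 - if j = l then 1 else 0 with hv
  set b : ℝ := β k1 j with hb
  -- key: B.mulVec (v + b • α k1) = 0
  have key : Matrix.mulVec (Matrix.of β) (v + b • α k1) =
      Matrix.mulVec (Matrix.of β) 0 := by
    rw [Matrix.mulVec_zero]
    funext k
    simp only [Matrix.mulVec, dotProduct, Matrix.of_apply, Pi.add_apply, Pi.smul_apply, smul_eq_mul,
      Pi.zero_apply]
    have hαv : ∑ s, β k s * (v s + b * α k1 s)
        = (∑ s, β k s * v s) + b * ∑ s, β k s * α k1 s := by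
      rw [Finset.mul_sum, ← Finset.sum_add_distrib]
      congr 1; funext s; ring
    rw [hαv, hbio]
    have hβv : ∑ s, β k s * v s = (∑ s, β k s) - β k j := by
      simp only [hv, mul_sub, mul_one, Finset.sum_sub_distrib]
      congr 1
      rw [Finset.sum_eq_single j]
      · simp
      · intro s _ hs; simp [Ne.symm hs]
      · intro h; exact absurd (Finset.mem_univ j) h
    rw [hβv]
    rcases Nat.lt_or_ge (k : ℕ) 1 with hk | hk
    · have : k = k0 := by ext; simpa using Nat.lt_one_iff.mp hk
      subst this
      have : k0 ≠ k1 := by intro h; simpa using congrArg Fin.val h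
      simp [hbeta1, this, Finset.sum_ite_eq']
    rcases Nat.lt_or_ge (k : ℕ) 2 with hk2 | hk2
    · have : k = k1 := by ext; simp only [k1]; omega
      subst this
      simp [hsum k1 hk, ← hb]
    · have hk1 : k ≠ k1 := by intro h; rw [h] at hk2; simp [k1] at hk2
      simp [hsum k (by omega), hzero k hk2, hk1]
  have hveq : v + b • α k1 = 0 := hinj key
  -- b ≠ 0, else v = 0 contradicting existence of l ≠ j
  have hbne : b ≠ 0 := by
    intro hb0
    rw [hb0, zero_smul, add_zero] at hveq
    have : Nontrivial (Fin N) := Fin.nontrivial_iff_two_le.mpr (by omega)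
    obtain ⟨l, hl⟩ := exists_ne j
    have := congrFun hveq l
    simp [hv, Ne.symm hl] at this
  refine ⟨-b⁻¹, by simp [hbne], fun l => ?_⟩
  have := congrFun hveq l
  simp only [Matrix.of_apply, Pi.add_apply, Pi.smul_apply, smul_eq_mul, Pi.zero_apply, hv] at this
  field_simp
  linarith [this]
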